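/- Fix α > 1 and suppose a prior probability measure w* on Θ attains C_α = sup_w I_α^w(θ,Y|X^n) over prior probability measures w on Θ. Let p̂*_α be the conditional α-NML predictor associated with w*, i.e. p̂*_α(y|x^n) = ( ∫_Θ p_θ(y)^α w*(dθ|x^n) )^{1/α} / Σ_{y'} ( ∫_Θ p_θ(y')^α w*(dθ|x^n) )^{1/α} with posterior w*(dθ|x^n) = w*(dθ) p_θ(x^n)/∫_Θ p_{θ'}(x^n) w*(dθ'). Then for every θ ∈ Θ, the batch α-regret satisfies R_α(p̂*_α,θ) ≤ C_α. -/

import Mathlib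

open MeasureTheory Real Filter

/-- `q` is a probability mass function on the finite type `B`. -/
def IsPMF {B : Type*} [Fintype B] (q : B → ℝ) : Prop :=
  (∀ y, 0 ≤ q y) ∧ ∑ y, q y = 1

/-- Probability of a tuple of `n` i.i.d. batches: `p_θ(x^n) = ∏ i, p_θ(x_i)`. -/
def prodP {Θ B : Type*} (p : Θ → B → ℝ) (n : ℕ) (θ : Θ) (x : Fin n → B) : ℝ :=
  ∏ i, p θ (x i)

/-- The batch `α`-regret
`R_α(p̂,θ) = (1/(α-1)) log ( Σ_{x^n} p_θ(x^n) Σ_y p_θ(y) (p_θ(y)/p̂(y|x^n))^(α-1) )`. -/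
noncomputable def alphaRegret {Θ B : Type*} [Fintype B] (α : ℝ) (p : Θ → B → ℝ) (n : ℕ)
    (phat : (Fin n → B) → B → ℝ) (θ : Θ) : ℝ :=
  (α - 1)⁻¹ * Real.log (∑ x : Fin n → B, prodP p n θ x *
    ∑ y : B, p θ y * (p θ y / phat x y) ^ (α - 1))

/-- The conditional Rényi divergence `D_α(Y ‖ Ŷ | θ, X^n)` under the joint law
`w(dθ) p_θ(x^n) p_θ(y)`. -/
noncomputable def condRenyiDiv {Θ B : Type*} [MeasurableSpace Θ] [Fintype B] (α : ℝ)
    (p : Θ → B → ℝ) (n : ℕ) (w : Measure Θ) (phat : (Fin n → B) → B → ℝ) : ℝ :=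
  (α - 1)⁻¹ * Real.log (∫ θ, (∑ x : Fin n → B, prodP p n θ x *
    ∑ y : B, p θ y * (p θ y / phat x y) ^ (α - 1)) ∂w)

/-- The conditional Sibson mutual information
`I_α^w(θ,Y|X^n) = (1/(α-1)) log Σ_{x^n} { Σ_y ( ∫ p_θ(x^n) p_θ(y)^α w(dθ) )^(1/α) }^α`. -/
noncomputable def sibsonMI {Θ B : Type*} [MeasurableSpace Θ] [Fintype B] (α : ℝ)
    (p : Θ → B → ℝ) (n : ℕ) (w : Measure Θ) : ℝ :=
  (α - 1)⁻¹ * Real.log (∑ x : Fin n → B,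
    (∑ y : B, (∫ θ, prodP p n θ x * p θ y ^ α ∂w) ^ α⁻¹) ^ α)

/-- Integral of `g` against the posterior `w(dθ|x^n) = w(dθ) p_θ(x^n) / ∫ p_θ'(x^n) w(dθ')`. -/
noncomputable def posteriorInt {Θ B : Type*} [MeasurableSpace Θ] (p : Θ → B → ℝ) (n : ℕ)
    (w : Measure Θ) (x : Fin n → B) (g : Θ → ℝ) : ℝ :=
  (∫ θ, prodP p n θ x * g θ ∂w) / (∫ θ, prodP p n θ x ∂w)

/-- The conditional `α`-NML predictor
`p̂_α(y|x^n) = ( ∫ p_θ(y)^α w(dθ|x^n) )^(1/α) / Σ_y' ( ∫ p_θ(y')^α w(dθ|x^n) )^(1/α)`. -/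
noncomputable def alphaNML {Θ B : Type*} [MeasurableSpace Θ] [Fintype B] (α : ℝ)
    (p : Θ → B → ℝ) (n : ℕ) (w : Measure Θ) (x : Fin n → B) (y : B) : ℝ :=
  (posteriorInt p n w x fun θ => p θ y ^ α) ^ α⁻¹ /
    ∑ y' : B, (posteriorInt p n w x fun θ => p θ y' ^ α) ^ α⁻¹

/-!
Write `G(b) = ∑ₓ (∑ᵧ b(x,y)^{1/α})^α`, so that `I_α^w = log G(b_w) / (α - 1)` with
`b_w(x,y) = ∫ p_θ(x^n) p_θ(y)^α w(dθ)` affine in `w`. Mixing `w*` with a point mass at `θ` moves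
`b_{w*}` along the segment towards `c(x,y) = p_θ(x^n) p_θ(y)^α`, so optimality of `w*` makes the
one-sided derivative of `G` at `b = b_{w*}` in that direction nonpositive. With
`Sₓ = ∑ᵧ b(x,y)^{1/α}` this derivative is `∑ₓ Sₓ^{α-1} ∑ᵧ b(x,y)^{1/α-1} c(x,y) - G(b)`, and the
double sum is exactly `exp((α - 1) R_α(p̂*_α, θ))`, because `p̂*_α(y|x^n) = b(x,y)^{1/α} / Sₓ`.
-/

open Set Topology

theorem HasDerivWithinAt.nonpos_of_eventually_le {f : ℝ → ℝ} {f' a : ℝ}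
    (hf : HasDerivWithinAt f f' (Ioi a) a) (hle : ∀ᶠ t in 𝓝[>] a, f t ≤ f a) : f' ≤ 0 := by
  refine le_of_tendsto ((hasDerivWithinAt_iff_tendsto_slope' self_notMem_Ioi).mp hf) ?_
  filter_upwards [hle, self_mem_nhdsWithin] with t hft hat
  rw [slope_def_field]
  exact div_nonpos_of_nonpos_of_nonneg (sub_nonpos.2 hft) (sub_nonneg.2 (le_of_lt hat))

theorem mul_mul_div_rpow_inv_div_rpow {α : ℝ} (hα : α ≠ 0) (P : ℝ) {u β S : ℝ} (hu : 0 ≤ u)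
    (hβ : 0 < β) (hS : 0 < S) :
    P * (u * (u / (β ^ α⁻¹ / S)) ^ (α - 1)) = S ^ (α - 1) * (β ^ (α⁻¹ - 1) * (P * u ^ α)) := by
  have hexp : α⁻¹ * (α - 1) = 1 - α⁻¹ := by field_simp
  have hu' : u ^ α = u * u ^ (α - 1) := by
    conv_lhs => rw [← add_sub_cancel 1 α]
    rw [Real.rpow_add' hu (by simpa using hα), Real.rpow_one]
  rw [div_div_eq_mul_div, Real.div_rpow (by positivity) (by positivity),
    Real.mul_rpow hu hS.le, ← Real.rpow_mul hβ.le, hexp, hu',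
    show α⁻¹ - 1 = -(1 - α⁻¹) by ring, Real.rpow_neg hβ.le]
  field_simp

theorem mul_log_le_mul_log_of_le {a K F : ℝ} (ha : 0 ≤ a) (hK : 0 ≤ K) (hKF : K ≤ F)
    (hF : 0 ≤ a * Real.log F) : a * Real.log K ≤ a * Real.log F := by
  rcases hK.eq_or_lt with rfl | hK
  · simpa using hF -- `Real.log 0 = 0`
  · exact mul_le_mul_of_nonneg_left (Real.log_le_log hK hKF) ha

section SegmentDerivative

variable {ι : Type*} (s : Finset ι) {b : ι → ℝ} (c : ι → ℝ)

theorem hasDerivAt_sum_rpow_segment (q : ℝ) (hb : ∀ y ∈ s, 0 < b y) :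
    HasDerivAt (fun t => ∑ y ∈ s, ((1 - t) * b y + t * c y) ^ q)
      (∑ y ∈ s, (c y - b y) * q * b y ^ (q - 1)) 0 := by
  refine HasDerivAt.fun_sum fun y hy => ?_
  have hline : HasDerivAt (fun t : ℝ => (1 - t) * b y + t * c y) (-1 * b y + 1 * c y) 0 :=
    (((hasDerivAt_id 0).const_sub 1).mul_const (b y)).add ((hasDerivAt_id 0).mul_const (c y))
  rw [neg_one_mul, one_mul, neg_add_eq_sub] at hline
  simpa using hline.rpow_const (p := q) (Or.inl (by simpa using (hb y hy).ne'))

theorem hasDerivAt_rpow_sum_rpow_segment {α : ℝ} (hα : 1 < α) (hb : ∀ y ∈ s, 0 < b y) :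
    HasDerivAt (fun t => (∑ y ∈ s, ((1 - t) * b y + t * c y) ^ α⁻¹) ^ α)
      ((∑ y ∈ s, b y ^ α⁻¹) ^ (α - 1) * ∑ y ∈ s, b y ^ (α⁻¹ - 1) * c y
        - (∑ y ∈ s, b y ^ α⁻¹) ^ α) 0 := by
  have hα0 : α ≠ 0 := by positivity
  set S := ∑ y ∈ s, b y ^ α⁻¹ with hSdef
  have hinner : ∑ y ∈ s, (c y - b y) * α⁻¹ * b y ^ (α⁻¹ - 1)
      = α⁻¹ * (∑ y ∈ s, b y ^ (α⁻¹ - 1) * c y - S) := by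
    rw [mul_sub, Finset.mul_sum, Finset.mul_sum, ← Finset.sum_sub_distrib]
    refine Finset.sum_congr rfl fun y hy => ?_
    rw [Real.rpow_sub_one (hb y hy).ne']
    field_simp [(hb y hy).ne']
  have hS : S ^ α = S ^ (α - 1) * S := by
    rw [← Real.rpow_add_one' (Finset.sum_nonneg fun y hy => Real.rpow_nonneg (hb y hy).le _)
      (by simpa using hα0), sub_add_cancel]
  convert (hasDerivAt_sum_rpow_segment s c α⁻¹ hb).rpow_const (Or.inr hα.le) using 1
  simp only [sub_zero, one_mul, zero_mul, add_zero]
  rw [← hSdef, hinner, hS]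
  field_simp

end SegmentDerivative

section SibsonPowerSum

variable {X B : Type*} [Fintype X] [Fintype B]

noncomputable def sibsonPowerSum (α : ℝ) (b : X → B → ℝ) : ℝ :=
  ∑ x, (∑ y, b x y ^ α⁻¹) ^ α

theorem sibsonPowerSum_pos {α : ℝ} {b : X → B → ℝ} (hb : ∀ x y, 0 ≤ b x y)
    {x₀ : X} {y₀ : B} (hpos : 0 < b x₀ y₀) : 0 < sibsonPowerSum α b := by
  have hrow : 0 < ∑ y, b x₀ y ^ α⁻¹ :=
    Finset.sum_pos' (fun y _ => Real.rpow_nonneg (hb x₀ y) _)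
      ⟨y₀, Finset.mem_univ _, Real.rpow_pos_of_pos hpos _⟩
  exact Finset.sum_pos' (fun x _ => Real.rpow_nonneg
      (Finset.sum_nonneg fun y _ => Real.rpow_nonneg (hb x y) _) _)
    ⟨x₀, Finset.mem_univ _, Real.rpow_pos_of_pos hrow _⟩

/-- Only the coordinates with `b x y > 0` enter: `u ↦ u ^ α⁻¹` is not differentiable at `0`, and
dropping the other coordinates only lowers the objective. -/
theorem sum_rpow_mul_sum_le_sibsonPowerSum {α : ℝ} (hα : 1 < α) {b c : X → B → ℝ}
    (hb : ∀ x y, 0 ≤ b x y) (hc : ∀ x y, 0 ≤ c x y)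
    (hmax : ∀ t ∈ Set.Ioo (0 : ℝ) 1,
      sibsonPowerSum α (fun x y => (1 - t) * b x y + t * c x y) ≤ sibsonPowerSum α b) :
    ∑ x, (∑ y, b x y ^ α⁻¹) ^ (α - 1) * ∑ y with 0 < b x y, b x y ^ (α⁻¹ - 1) * c x y
      ≤ sibsonPowerSum α b := by
  have hα0 : 0 < α := by linarith
  have hsupp : ∀ x, ∑ y with 0 < b x y, b x y ^ α⁻¹ = ∑ y, b x y ^ α⁻¹ := fun x =>
    Finset.sum_filter_of_ne fun y _ hne =>
      (hb x y).lt_of_ne fun h => hne (by rw [← h, Real.zero_rpow (inv_ne_zero hα0.ne')])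
  set L : ℝ → ℝ := fun t =>
    ∑ x, (∑ y with 0 < b x y, ((1 - t) * b x y + t * c x y) ^ α⁻¹) ^ α
  have hL0 : L 0 = sibsonPowerSum α b := by
    simp only [L, sub_zero, one_mul, zero_mul, add_zero, hsupp]
    rfl
  have hLle : ∀ᶠ t in 𝓝[>] 0, L t ≤ L 0 := by
    filter_upwards [Ioo_mem_nhdsGT one_pos] with t ht
    have hnn : ∀ x y, 0 ≤ ((1 - t) * b x y + t * c x y) ^ α⁻¹ := fun x y =>
      Real.rpow_nonneg (add_nonneg (mul_nonneg (by linarith [ht.2]) (hb x y))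
        (mul_nonneg ht.1.le (hc x y))) _
    refine le_trans (Finset.sum_le_sum fun x _ => ?_) (hL0 ▸ hmax t ht)
    exact Real.rpow_le_rpow (Finset.sum_nonneg fun y _ => hnn x y)
      (Finset.sum_le_sum_of_subset_of_nonneg (Finset.filter_subset _ _)
        fun y _ _ => hnn x y) hα0.le
  have hderiv := HasDerivAt.fun_sum (u := Finset.univ) fun x _ =>
    hasDerivAt_rpow_sum_rpow_segment {y | 0 < b x y} (c x) hα
      fun y hy => (Finset.mem_filter.1 hy).2
  simpa only [sibsonPowerSum, hsupp, Finset.sum_sub_distrib, sub_nonpos] using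
    hderiv.hasDerivWithinAt.nonpos_of_eventually_le hLle

end SibsonPowerSum

section SourceClass

variable {Θ B : Type*} {p : Θ → B → ℝ}

section

variable [Fintype B]

theorem IsPMF.le_one {q : B → ℝ} (hq : IsPMF q) (y : B) : q y ≤ 1 :=
  hq.2 ▸ Finset.single_le_sum (fun z _ => hq.1 z) (Finset.mem_univ y)

theorem prodP_nonneg {θ : Θ} (hθ : IsPMF (p θ)) (n : ℕ) (x : Fin n → B) : 0 ≤ prodP p n θ x :=
  Finset.prod_nonneg fun i _ => hθ.1 (x i)

theorem prodP_le_one {θ : Θ} (hθ : IsPMF (p θ)) (n : ℕ) (x : Fin n → B) : prodP p n θ x ≤ 1 :=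
  Finset.prod_le_one (fun i _ => hθ.1 (x i)) fun i _ => hθ.le_one (x i)

theorem prodP_mul_rpow_nonneg {θ : Θ} (hθ : IsPMF (p θ)) (α : ℝ) (n : ℕ) (x : Fin n → B)
    (y : B) : 0 ≤ prodP p n θ x * p θ y ^ α :=
  mul_nonneg (prodP_nonneg hθ n x) (Real.rpow_nonneg (hθ.1 y) α)

theorem sum_prodP_eq_one {θ : Θ} (hθ : IsPMF (p θ)) (n : ℕ) : ∑ x, prodP p n θ x = 1 := by
  rw [← one_pow n, ← hθ.2, Fintype.sum_pow]
  rfl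

theorem sibsonPowerSum_prodP_mul_rpow {θ : Θ} (hθ : IsPMF (p θ)) (n : ℕ) {α : ℝ} (hα : α ≠ 0) :
    sibsonPowerSum α (fun x y => prodP p n θ x * p θ y ^ α) = 1 := by
  have hrow : ∀ x, (∑ y, (prodP p n θ x * p θ y ^ α) ^ α⁻¹) ^ α = prodP p n θ x := fun x => by
    simp_rw [Real.mul_rpow (prodP_nonneg hθ n x) (Real.rpow_nonneg (hθ.1 _) α),
      ← Real.rpow_mul (hθ.1 _), mul_inv_cancel₀ hα, Real.rpow_one, ← Finset.mul_sum, hθ.2,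
      mul_one, ← Real.rpow_mul (prodP_nonneg hθ n x), inv_mul_cancel₀ hα, Real.rpow_one]
  simp only [sibsonPowerSum, hrow, sum_prodP_eq_one hθ]

end

variable [MeasurableSpace Θ]

theorem measurable_prodP_mul_rpow (hmeas : ∀ y, Measurable fun θ => p θ y)
    (α : ℝ) (n : ℕ) (x : Fin n → B) (y : B) : Measurable fun θ => prodP p n θ x * p θ y ^ α :=
  (Finset.measurable_prod _ fun i _ => hmeas (x i)).mul ((hmeas y).pow_const α)

noncomputable def sibsonKernel (α : ℝ) (p : Θ → B → ℝ) (n : ℕ) (w : Measure Θ)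
    (x : Fin n → B) (y : B) : ℝ :=
  ∫ θ, prodP p n θ x * p θ y ^ α ∂w

theorem sibsonKernel_dirac (hmeas : ∀ y, Measurable fun θ => p θ y) (α : ℝ) (n : ℕ) (θ : Θ) :
    sibsonKernel α p n (Measure.dirac θ) = fun x y => prodP p n θ x * p θ y ^ α := by
  ext x y
  exact integral_dirac' _ θ (measurable_prodP_mul_rpow hmeas α n x y).stronglyMeasurable

theorem isProbabilityMeasure_mixture (μ ν : Measure Θ) [IsProbabilityMeasure μ]
    [IsProbabilityMeasure ν] {t : ℝ} (ht₀ : 0 ≤ t) (ht₁ : t ≤ 1) :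
    IsProbabilityMeasure (ENNReal.ofReal (1 - t) • μ + ENNReal.ofReal t • ν) := by
  constructor
  simp only [Measure.add_apply, Measure.smul_apply, measure_univ, smul_eq_mul, mul_one]
  rw [← ENNReal.ofReal_add (by linarith) ht₀, sub_add_cancel, ENNReal.ofReal_one]

variable [Fintype B]

theorem sibsonMI_eq (α : ℝ) (p : Θ → B → ℝ) (n : ℕ) (w : Measure Θ) :
    sibsonMI α p n w = (α - 1)⁻¹ * Real.log (sibsonPowerSum α (sibsonKernel α p n w)) :=
  rfl

theorem sibsonKernel_nonneg (hp : ∀ θ, IsPMF (p θ)) (α : ℝ) (n : ℕ) (w : Measure Θ)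
    (x : Fin n → B) (y : B) : 0 ≤ sibsonKernel α p n w x y :=
  integral_nonneg fun θ => prodP_mul_rpow_nonneg (hp θ) α n x y

theorem integrable_prodP_mul_rpow (hp : ∀ θ, IsPMF (p θ)) (hmeas : ∀ y, Measurable fun θ => p θ y)
    {α : ℝ} (hα : 0 ≤ α) (n : ℕ) (x : Fin n → B) (y : B) (w : Measure Θ) [IsFiniteMeasure w] :
    Integrable (fun θ => prodP p n θ x * p θ y ^ α) w := by
  refine .of_bound (measurable_prodP_mul_rpow hmeas α n x y).aestronglyMeasurable 1
    (ae_of_all _ fun θ => ?_)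
  have hpy := Real.rpow_le_one ((hp θ).1 y) ((hp θ).le_one y) hα
  rw [Real.norm_of_nonneg (prodP_mul_rpow_nonneg (hp θ) α n x y)]
  exact mul_le_one₀ (prodP_le_one (hp θ) n x) (Real.rpow_nonneg ((hp θ).1 y) α) hpy

theorem sibsonMI_dirac (hp : ∀ θ, IsPMF (p θ)) (hmeas : ∀ y, Measurable fun θ => p θ y)
    {α : ℝ} (hα : α ≠ 0) (n : ℕ) (θ : Θ) : sibsonMI α p n (Measure.dirac θ) = 0 := by
  simp only [sibsonMI_eq, sibsonKernel_dirac hmeas, sibsonPowerSum_prodP_mul_rpow (hp θ) n hα,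
    Real.log_one, mul_zero]

theorem sibsonKernel_mixture_dirac (hp : ∀ θ, IsPMF (p θ))
    (hmeas : ∀ y, Measurable fun θ => p θ y) {α : ℝ} (hα : 0 ≤ α) (n : ℕ) (w : Measure Θ)
    [IsFiniteMeasure w] (θ : Θ) {t : ℝ} (ht₀ : 0 ≤ t) (ht₁ : t ≤ 1) :
    sibsonKernel α p n (ENNReal.ofReal (1 - t) • w + ENNReal.ofReal t • Measure.dirac θ)
      = fun x y => (1 - t) * sibsonKernel α p n w x y + t * (prodP p n θ x * p θ y ^ α) := by
  ext x y
  have hint := integrable_prodP_mul_rpow hp hmeas hα n x y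
  rw [sibsonKernel, integral_add_measure ((hint w).smul_measure ENNReal.ofReal_ne_top)
    ((hint _).smul_measure ENNReal.ofReal_ne_top), integral_smul_measure, integral_smul_measure,
    ENNReal.toReal_ofReal (by linarith), ENNReal.toReal_ofReal ht₀]
  rw [← sibsonKernel, ← sibsonKernel, sibsonKernel_dirac hmeas]
  rfl

theorem exists_sibsonKernel_pos (hp : ∀ θ, IsPMF (p θ)) (hmeas : ∀ y, Measurable fun θ => p θ y)
    {α : ℝ} (hα : 0 ≤ α) (n : ℕ) (w : Measure Θ) [IsProbabilityMeasure w] :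
    ∃ x y, 0 < sibsonKernel α p n w x y := by
  have hpos : ∀ θ, 0 < ∑ x, ∑ y, prodP p n θ x * p θ y ^ α := fun θ => by
    obtain ⟨y, -, hy⟩ := Finset.exists_lt_of_sum_lt (s := Finset.univ) (f := 0) (g := p θ)
      (by simp [(hp θ).2])
    rw [← Finset.sum_mul_sum, sum_prodP_eq_one (hp θ), one_mul]
    exact Finset.sum_pos' (fun y _ => Real.rpow_nonneg ((hp θ).1 y) α)
      ⟨y, Finset.mem_univ y, Real.rpow_pos_of_pos hy α⟩
  have hint := integrable_prodP_mul_rpow hp hmeas hα n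
  have htotal : 0 < ∑ x, ∑ y, sibsonKernel α p n w x y := by
    simp only [sibsonKernel]
    simp_rw [← integral_finsetSum _ fun y _ => hint _ y w]
    rw [← integral_finsetSum _ fun x _ => integrable_finsetSum _ fun y _ => hint x y w,
      integral_pos_iff_support_of_nonneg (fun θ => (hpos θ).le)
        (integrable_finsetSum _ fun x _ => integrable_finsetSum _ fun y _ => hint x y w),
      Function.support_eq_univ fun θ => (hpos θ).ne', measure_univ]
    exact one_pos
  by_contra! hzero
  exact htotal.not_ge (Finset.sum_nonpos fun x _ => Finset.sum_nonpos fun y _ => hzero x y)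

theorem sibsonKernel_le_integral_prodP (hp : ∀ θ, IsPMF (p θ))
    (hmeas : ∀ y, Measurable fun θ => p θ y) {α : ℝ} (hα : 0 ≤ α) (n : ℕ) (w : Measure Θ)
    [IsFiniteMeasure w] (x : Fin n → B) (y : B) :
    sibsonKernel α p n w x y ≤ ∫ θ, prodP p n θ x ∂w := by
  have hint : Integrable (fun θ => prodP p n θ x) w := by
    simpa using integrable_prodP_mul_rpow hp hmeas le_rfl n x y w
  refine integral_mono (integrable_prodP_mul_rpow hp hmeas hα n x y w) hint fun θ => ?_
  exact mul_le_of_le_one_right (prodP_nonneg (hp θ) n x)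
    (Real.rpow_le_one ((hp θ).1 y) ((hp θ).le_one y) hα)

theorem alphaNML_eq (hp : ∀ θ, IsPMF (p θ)) (hmeas : ∀ y, Measurable fun θ => p θ y)
    {α : ℝ} (hα : 0 < α) (n : ℕ) (w : Measure Θ) [IsFiniteMeasure w] (x : Fin n → B) (y : B) :
    alphaNML α p n w x y
      = sibsonKernel α p n w x y ^ α⁻¹ / ∑ y', sibsonKernel α p n w x y' ^ α⁻¹ := by
  have hb := sibsonKernel_nonneg hp α n w x
  rcases (integral_nonneg fun θ => prodP_nonneg (hp θ) n x : 0 ≤ ∫ θ, prodP p n θ x ∂w).eq_or_lt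
    with hm | hm
  · have hzero : ∀ y, sibsonKernel α p n w x y = 0 := fun y =>
      le_antisymm (hm ▸ sibsonKernel_le_integral_prodP hp hmeas hα.le n w x y) (hb y)
    simp [alphaNML, posteriorInt, ← hm, hzero]
  · change (sibsonKernel α p n w x y / _) ^ α⁻¹ / ∑ y', (sibsonKernel α p n w x y' / _) ^ α⁻¹ = _
    simp_rw [Real.div_rpow (hb _) hm.le]
    rw [← Finset.sum_div, div_div_div_cancel_right₀ (Real.rpow_pos_of_pos hm _).ne']

theorem alphaRegret_alphaNML_eq (hp : ∀ θ, IsPMF (p θ)) (hmeas : ∀ y, Measurable fun θ => p θ y)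
    {α : ℝ} (hα : 1 < α) (n : ℕ) (w : Measure Θ) [IsFiniteMeasure w] (θ : Θ) :
    alphaRegret α p n (alphaNML α p n w) θ = (α - 1)⁻¹ * Real.log (∑ x,
      (∑ y, sibsonKernel α p n w x y ^ α⁻¹) ^ (α - 1) *
        ∑ y with 0 < sibsonKernel α p n w x y,
          sibsonKernel α p n w x y ^ (α⁻¹ - 1) * (prodP p n θ x * p θ y ^ α)) := by
  have hα0 : 0 < α := by linarith
  have hb := sibsonKernel_nonneg hp α n w
  rw [alphaRegret]
  congr 2
  refine Finset.sum_congr rfl fun x _ => ?_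
  rw [Finset.mul_sum, Finset.mul_sum]
  -- where the kernel vanishes, so does the predictor, and `u / 0 = 0` kills the term
  rw [← Finset.sum_filter_of_ne fun y _ hne => (hb x y).lt_of_ne' fun h0 => hne (by
    rw [alphaNML_eq hp hmeas hα0, h0, Real.zero_rpow (inv_ne_zero hα0.ne'), zero_div, div_zero,
      Real.zero_rpow (by linarith), mul_zero, mul_zero])]
  refine Finset.sum_congr rfl fun y hy => ?_
  have hby := (Finset.mem_filter.1 hy).2
  rw [alphaNML_eq hp hmeas hα0]
  exact mul_mul_div_rpow_inv_div_rpow hα0.ne' _ ((hp θ).1 y) hby (Finset.sum_pos'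
    (fun y' _ => Real.rpow_nonneg (hb x y') _) ⟨y, Finset.mem_univ y, Real.rpow_pos_of_pos hby _⟩)

theorem sibsonPowerSum_mixture_le (hp : ∀ θ, IsPMF (p θ))
    (hmeas : ∀ y, Measurable fun θ => p θ y) {α : ℝ} (hα : 1 < α) (n : ℕ) (w : Measure Θ)
    [IsProbabilityMeasure w]
    (hopt : ∀ w' : Measure Θ, IsProbabilityMeasure w' → sibsonMI α p n w' ≤ sibsonMI α p n w)
    (θ : Θ) (t : ℝ) (ht : t ∈ Set.Ioo (0 : ℝ) 1) :
    sibsonPowerSum α (fun x y => (1 - t) * sibsonKernel α p n w x y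
        + t * (prodP p n θ x * p θ y ^ α))
      ≤ sibsonPowerSum α (sibsonKernel α p n w) := by
  have hα0 : 0 < α := by linarith
  have hb := sibsonKernel_nonneg hp α n w
  obtain ⟨x₀, y₀, hpos⟩ := exists_sibsonKernel_pos hp hmeas hα0.le n w
  have hmix := hopt _ (isProbabilityMeasure_mixture w (Measure.dirac θ) ht.1.le ht.2.le)
  rw [sibsonMI_eq, sibsonMI_eq, sibsonKernel_mixture_dirac hp hmeas hα0.le n w θ ht.1.le ht.2.le,
    mul_le_mul_iff_right₀ (inv_pos.2 (sub_pos.2 hα))] at hmix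
  have hbt : ∀ x y, 0 ≤ (1 - t) * sibsonKernel α p n w x y + t * (prodP p n θ x * p θ y ^ α) :=
    fun x y => add_nonneg (mul_nonneg (by linarith [ht.2]) (hb x y))
      (mul_nonneg ht.1.le (prodP_mul_rpow_nonneg (hp θ) α n x y))
  have hbt_pos : 0 < (1 - t) * sibsonKernel α p n w x₀ y₀ + t * (prodP p n θ x₀ * p θ y₀ ^ α) :=
    lt_add_of_pos_of_le (mul_pos (by linarith [ht.2]) hpos)
      (mul_nonneg ht.1.le (prodP_mul_rpow_nonneg (hp θ) α n x₀ y₀))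
  exact (Real.log_le_log_iff (sibsonPowerSum_pos hbt hbt_pos) (sibsonPowerSum_pos hb hpos)).1 hmix

end SourceClass


theorem alphaNML_regret_le_sibson_capacity_general
    {𝒳 Θ : Type*} [Fintype 𝒳] [MeasurableSpace Θ]
    (ℓ n : ℕ) (α : ℝ) (hα : 1 < α)
    (p : Θ → (Fin ℓ → 𝒳) → ℝ)
    (hp : ∀ θ, IsPMF (p θ))
    (hmeas : ∀ z : Fin ℓ → 𝒳, Measurable fun θ => p θ z)
    (wstar : Measure Θ) [IsProbabilityMeasure wstar]
    (hopt : ∀ w : Measure Θ, IsProbabilityMeasure w →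
      sibsonMI α p n w ≤ sibsonMI α p n wstar) :
    ∀ θ : Θ, alphaRegret α p n (alphaNML α p n wstar) θ ≤ sibsonMI α p n wstar := by
  intro θ
  have hb := sibsonKernel_nonneg hp α n wstar
  have hc := prodP_mul_rpow_nonneg (hp θ) α n
  have hcap : 0 ≤ sibsonMI α p n wstar :=
    sibsonMI_dirac hp hmeas (by positivity) n θ ▸ hopt _ inferInstance
  have hstationary := sum_rpow_mul_sum_le_sibsonPowerSum hα hb hc
    (sibsonPowerSum_mixture_le hp hmeas hα n wstar hopt θ)
  rw [sibsonMI_eq] at hcap ⊢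
  rw [alphaRegret_alphaNML_eq hp hmeas hα n wstar θ]
  refine mul_log_le_mul_log_of_le (inv_nonneg.2 (by linarith)) ?_ hstationary hcap
  exact Finset.sum_nonneg fun x _ => mul_nonneg
    (Real.rpow_nonneg (Finset.sum_nonneg fun y _ => Real.rpow_nonneg (hb x y) _) _)
    (Finset.sum_nonneg fun y _ => mul_nonneg (Real.rpow_nonneg (hb x y) _) (hc x y))

/-- For `α > 1`, if the prior `w*` attains
`C_α = sup_w I_α^w(θ,Y|X^n)` over prior probability measures, then the conditional `α`-NML
predictor `p̂*_α` associated with `w*` satisfies `R_α(p̂*_α,θ) ≤ C_α` for every `θ ∈ Θ`. -/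
theorem alphaNML_regret_le_sibson_capacity
    {𝒳 Θ : Type*} [Fintype 𝒳] [Nonempty 𝒳] [MeasurableSpace Θ]
    (ℓ n : ℕ) (hℓ : 0 < ℓ) (hn : 0 < n) (α : ℝ) (hα : 1 < α)
    (p : Θ → (Fin ℓ → 𝒳) → ℝ)
    (hp : ∀ θ, IsPMF (p θ))
    (hmeas : ∀ z : Fin ℓ → 𝒳, Measurable fun θ => p θ z)
    (wstar : Measure Θ) [IsProbabilityMeasure wstar]
    (hopt : ∀ w : Measure Θ, IsProbabilityMeasure w →
      sibsonMI α p n w ≤ sibsonMI α p n wstar) :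
    ∀ θ : Θ, alphaRegret α p n (alphaNML α p n wstar) θ ≤ sibsonMI α p n wstar :=
  alphaNML_regret_le_sibson_capacity_general ℓ n α hα p hp hmeas wstar hopt
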